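/- Let K be an algebraically closed field and g > 1 an integer satisfying Condition (*). Let I, J ⊆ M(2g+1) be g-element subsets, let ε1, ε2 be distinct elements of I and ε3, ε4 distinct elements of ∁I, and set η_i = η(ε_i) for i = 1, 2, 3, 4. Then the polynomial in the variable b given by [Ψ_{J,b}, Ψ_{∁J,b}]_{η1,η2} · [Ψ_{J,b}, Ψ_{∁J,b}]_{η3,η4} · b − [Η_{∁I}, Ψ_{J,b}]_{η1,η2} · [Η_I, Ψ_{∁J,b}]_{η3,η4} has degree exactly 4g − 1 in b; in particular, it is a nonzero polynomial in b. -/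

import Mathlib

open Polynomial Finset

/-- `Mset K n` is the set of `n`-th roots of unity in `K` other than `1`. -/
noncomputable def Mset (K : Type*) [Field K] (n : ℕ) : Finset K :=
  open scoped Classical in
  (Polynomial.nthRootsFinset n (1 : K)).filter (· ≠ 1)

/-- `Ψ_{J,b}(c) = ∏_{ε ∈ J} (c + b·η(ε))`, with `η(ε) = 1/(ε-1)`, regarded as a
polynomial in the indeterminate `b` (named `X` here). -/
noncomputable def PsiB {K : Type*} [Field K] (J : Finset K) (c : K) : K[X] :=
  ∏ ε ∈ J, (C c + C ((ε - 1)⁻¹) * X)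

/-- `Η_I(c) = ∏_{ε ∈ I} (c - η(ε))`, with `η(ε) = 1/(ε-1)` (a scalar, independent of `b`). -/
noncomputable def EtaV {K : Type*} [Field K] (I : Finset K) (c : K) : K :=
  ∏ ε ∈ I, (c - (ε - 1)⁻¹)

/-!
Write `A_{γδ} = [Ψ_{J,b}, Ψ_{∁J,b}]_{γ,δ}`. Up to the common factor `∏_{ε ∈ M} η(ε)`, both
products `Ψ_{J,b}(γ) Ψ_{∁J,b}(δ)` and `Ψ_{J,b}(δ) Ψ_{∁J,b}(γ)` are monic in `b` of degree `2g`,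
with roots `γ(1 - ε)` (`ε ∈ J`) and `δ(1 - ε)` (`ε ∈ ∁J`). Their leading terms cancel in
`A_{γδ}`, whose coefficient of `b^(2g-1)` is then a nonzero multiple of
`(γ - δ) (∑_{J} ε - ∑_{∁J} ε)`.

The two sums differ: their sum is `-1`, so equality would make `∑_{J} ε = -1/2`. In
characteristic `0` this is impossible because `∑_{J} ε` is an algebraic integer. Under (*) in
characteristic `p`, the minimal polynomial of a primitive `q`-th root of unity `ζ` over `𝔽_p` has
degree `ord_q(p) = 2g`, so `1, ζ, …, ζ^(2g-1)` are linearly independent over `𝔽_p`, which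
excludes the relation `∑_{J} ε - ∑_{∁J} ε = 0` with coefficients `±1`.

Hence `A₁₂ A₃₄ b` has degree `4g - 1`, while the product of the two `Η`-brackets has degree at
most `2g`.
-/

section RootsOfUnity

variable {K : Type*} [Field K] {n : ℕ} {ζ : K}

lemma mem_Mset_iff (hn : 0 < n) {ε : K} : ε ∈ Mset K n ↔ ε ^ n = 1 ∧ ε ≠ 1 := by
  classical
  simp [Mset, mem_nthRootsFinset hn]

lemma Mset_eq_image_range [DecidableEq K] (hζ : IsPrimitiveRoot ζ n) (hn : 0 < n) :
    Mset K n = (range (n - 1)).image fun i => ζ ^ (i + 1) := by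
  have : NeZero n := ⟨hn.ne'⟩
  ext x
  simp only [mem_Mset_iff hn, mem_image, mem_range]
  constructor
  · rintro ⟨hx, hx1⟩
    obtain ⟨i, hi, rfl⟩ := hζ.eq_pow_of_pow_eq_one hx
    obtain _ | i := i
    · exact absurd (pow_zero ζ) hx1
    · exact ⟨i, by omega, rfl⟩
  · rintro ⟨i, hi, rfl⟩
    exact ⟨by rw [← pow_mul, mul_comm, pow_mul, hζ.pow_eq_one, one_pow],
      hζ.pow_ne_one_of_pos_of_lt i.succ_ne_zero (by omega)⟩

lemma sum_Mset {M : Type*} [AddCommMonoid M] (hζ : IsPrimitiveRoot ζ n) (hn : 0 < n)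
    (f : K → M) : ∑ ε ∈ Mset K n, f ε = ∑ i ∈ range (n - 1), f (ζ ^ (i + 1)) := by
  classical
  rw [Mset_eq_image_range hζ hn, sum_image]
  intro i hi j hj h
  simp only [coe_range, Set.mem_Iio] at hi hj
  have := hζ.pow_inj (by omega) (by omega) h
  omega

lemma card_Mset (hζ : IsPrimitiveRoot ζ n) (hn : 0 < n) : (Mset K n).card = n - 1 := by
  simpa using sum_Mset hζ hn fun _ => (1 : ℕ)

lemma sum_Mset_id (hζ : IsPrimitiveRoot ζ n) (hn : 1 < n) : ∑ ε ∈ Mset K n, ε = -1 := by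
  have h := hζ.geom_sum_eq_zero hn
  rw [← Nat.sub_add_cancel hn.le, sum_range_succ', pow_zero] at h
  rw [sum_Mset hζ (by omega), eq_neg_of_add_eq_zero_left h]

lemma natDegree_minpoly_eq_orderOf {p : ℕ} [Fact p.Prime] [Algebra (ZMod p) K]
    (hζ : IsPrimitiveRoot ζ n) (hn : 0 < n) :
    (minpoly (ZMod p) ζ).natDegree = orderOf (p : ZMod n) := by
  have : NeZero n := ⟨hn.ne'⟩
  have : CharP K p := charP_of_injective_algebraMap (algebraMap (ZMod p) K).injective p
  have hpn : p.Coprime n := (Nat.Prime.coprime_iff_not_dvd Fact.out).mpr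
    ((CharP.cast_eq_zero_iff K p n).not.mp hζ.neZero'.out)
  have hint : IsIntegral (ZMod p) ζ := (hζ.isIntegral hn).tower_top
  have hdvd : minpoly (ZMod p) ζ ∣ cyclotomic n (ZMod p) := by
    refine minpoly.dvd _ _ ?_
    rw [aeval_def, eval₂_eq_eval_map, map_cyclotomic]
    exact (hζ.isRoot_cyclotomic hn).eq_zero
  rw [natDegree_of_dvd_cyclotomic_of_irreducible (f := 1) (by simp) hpn hdvd
    (minpoly.irreducible hint), ← orderOf_units]
  simp

end RootsOfUnity

lemma sum_sub_sum_sdiff_eq_sum_smul {R M : Type*} [Ring R] [AddCommGroup M] [Module R M]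
    [DecidableEq M] {J S : Finset M} (hJ : J ⊆ S) :
    ∑ x ∈ J, x - ∑ x ∈ S \ J, x = ∑ x ∈ S, (if x ∈ J then 1 else -1 : R) • x := by
  have hin : ∑ x ∈ J, (if x ∈ J then 1 else -1 : R) • x = ∑ x ∈ J, x :=
    sum_congr rfl fun x hx => by simp [hx]
  have hout : ∑ x ∈ S \ J, (if x ∈ J then 1 else -1 : R) • x = -∑ x ∈ S \ J, x := by
    rw [← sum_neg_distrib]
    exact sum_congr rfl fun x hx => by simp [(mem_sdiff.1 hx).2]
  rw [← sum_sdiff hJ, hin, hout]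
  abel

section SumOverHalf

variable {K : Type*} [Field K] [DecidableEq K] {n : ℕ} {ζ : K} {J : Finset K}

lemma sum_ne_sum_sdiff_Mset_of_charZero [CharZero K] (hζ : IsPrimitiveRoot ζ n) (hn : 1 < n)
    (hJ : J ⊆ Mset K n) : ∑ ε ∈ J, ε ≠ ∑ ε ∈ Mset K n \ J, ε := by
  intro heq
  have hhalf : ∑ ε ∈ J, ε = algebraMap ℚ K (-1 / 2) := by
    have h := sum_sdiff hJ (f := id)
    simp only [id, sum_Mset_id hζ hn] at h
    simp only [map_div₀, map_neg, map_one, map_ofNat]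
    linear_combination h / 2 + heq / 2
  have hint : IsIntegral ℤ (∑ ε ∈ J, ε) := IsIntegral.sum _ fun ε hε =>
    IsIntegral.of_pow (by omega) (((mem_Mset_iff (by omega)).1 (hJ hε)).1 ▸ isIntegral_one)
  rw [hhalf, isIntegral_algebraMap_iff (algebraMap ℚ K).injective] at hint
  obtain ⟨z, hz⟩ := IsIntegrallyClosed.isIntegral_iff.mp hint
  have hz' : (z : ℚ) = -1 / 2 := hz
  have h2z : ((2 * z : ℤ) : ℚ) = (-1 : ℤ) := by
    push_cast
    rw [hz']
    norm_num
  have := Int.cast_injective h2z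
  omega

lemma sum_ne_sum_sdiff_Mset_of_charP {p : ℕ} [Fact p.Prime] [Algebra (ZMod p) K]
    (hζ : IsPrimitiveRoot ζ n) (hn : 1 < n) (hord : orderOf (p : ZMod n) = n - 1)
    (hJ : J ⊆ Mset K n) : ∑ ε ∈ J, ε ≠ ∑ ε ∈ Mset K n \ J, ε := by
  set s : K → ZMod p := fun ε => if ε ∈ J then 1 else -1
  have hs : ∀ ε, s ε ≠ 0 := fun ε => by unfold s; split_ifs <;> simp
  have hli : LinearIndependent (ZMod p) fun i : Fin (n - 1) => ζ ^ (i : ℕ) := by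
    rw [← hord, ← natDegree_minpoly_eq_orderOf hζ (by omega)]
    exact linearIndependent_pow ζ
  intro heq
  have hrel : ζ * ∑ i : Fin (n - 1), s (ζ ^ ((i : ℕ) + 1)) • ζ ^ (i : ℕ) = 0 := by
    rw [← sub_eq_zero, sum_sub_sum_sdiff_eq_sum_smul (R := ZMod p) hJ,
      sum_Mset hζ (by omega)] at heq
    rw [← heq, mul_sum, Fin.sum_univ_eq_sum_range fun i => ζ * s (ζ ^ (i + 1)) • ζ ^ i]
    refine sum_congr rfl fun i _ => ?_
    rw [mul_smul_comm, pow_succ']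
  exact hs _ <| Fintype.linearIndependent_iff.mp hli _
    ((mul_eq_zero.mp hrel).resolve_left (hζ.ne_zero (by omega))) ⟨0, by omega⟩

lemma sum_ne_sum_sdiff_Mset (hζ : IsPrimitiveRoot ζ n) (hn : 1 < n)
    (hchar : ringChar K = 0 ∨
      (ringChar K).Prime ∧ orderOf ((ringChar K : ℕ) : ZMod n) = n - 1)
    (hJ : J ⊆ Mset K n) : ∑ ε ∈ J, ε ≠ ∑ ε ∈ Mset K n \ J, ε := by
  rcases hchar with h0 | ⟨hp, hord⟩
  · have := (CharP.ringChar_zero_iff_CharZero K).mp h0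
    exact sum_ne_sum_sdiff_Mset_of_charZero hζ hn hJ
  · have : Fact (ringChar K).Prime := ⟨hp⟩
    let _ : Algebra (ZMod (ringChar K)) K := ZMod.algebra K _
    exact sum_ne_sum_sdiff_Mset_of_charP hζ hn hord hJ

end SumOverHalf

lemma Polynomial.Monic.degree_sub_eq_of_nextCoeff_ne {R : Type*} [CommRing R] {p q : R[X]}
    (hp : p.Monic) (hq : q.Monic) (hdeg : p.natDegree = q.natDegree)
    (hne : p.nextCoeff ≠ q.nextCoeff) : (p - q).degree = (p.natDegree - 1 : ℕ) := by
  have : Nontrivial R := nontrivial_of_ne _ _ hne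
  have hpos : 0 < p.natDegree := by
    by_contra! h
    simp [nextCoeff, show p.natDegree = 0 by omega, ← hdeg] at hne
  have hcoeff : (p - q).coeff (p.natDegree - 1) ≠ 0 := by
    rwa [coeff_sub, ← nextCoeff_of_natDegree_pos hpos, hdeg,
      ← nextCoeff_of_natDegree_pos (hdeg ▸ hpos), sub_ne_zero]
  have hlt : (p - q).natDegree < p.natDegree := by
    rw [natDegree_lt_iff_degree_lt fun h => hcoeff (by simp [h]),
      ← degree_eq_natDegree hp.ne_zero]
    exact degree_sub_lt_left
      (by rw [degree_eq_natDegree hp.ne_zero, degree_eq_natDegree hq.ne_zero, hdeg])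
      hp.ne_zero (by rw [hp.leadingCoeff, hq.leadingCoeff])
  exact degree_eq_of_le_of_coeff_ne_zero
    (degree_le_natDegree.trans (by exact_mod_cast (by omega))) hcoeff

lemma Polynomial.degree_mul_mul_X_sub_of_degree_lt {R : Type*} [CommRing R] [IsDomain R]
    {A₁ A₂ B : R[X]} {m : ℕ} (h₁ : A₁.degree = m) (h₂ : A₂.degree = m)
    (hB : B.degree < ((2 * m + 1 : ℕ) : WithBot ℕ)) :
    (A₁ * A₂ * X - B).degree = ((2 * m + 1 : ℕ) : WithBot ℕ) := by
  have hlead : (A₁ * A₂ * X).degree = ((2 * m + 1 : ℕ) : WithBot ℕ) := by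
    rw [degree_mul, degree_mul, h₁, h₂, degree_X, two_mul]
    norm_cast
  rw [degree_sub_eq_left_of_degree_lt (hlead ▸ hB), hlead]

section PsiB

variable {K : Type*} [Field K]

lemma PsiB_eq_C_mul_prod_X_sub_C {S : Finset K} (hS : ∀ ε ∈ S, ε ≠ 1) (c : K) :
    PsiB S c = C (∏ ε ∈ S, (ε - 1)⁻¹) * ∏ ε ∈ S, (X - C (c * (1 - ε))) := by
  rw [PsiB, map_prod, ← prod_mul_distrib]
  refine prod_congr rfl fun ε hε => ?_
  have hε : ε - 1 ≠ 0 := sub_ne_zero.mpr (hS ε hε)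
  rw [mul_sub, ← C_mul, show (ε - 1)⁻¹ * (c * (1 - ε)) = -c by field_simp; ring, C_neg]
  ring

lemma degree_PsiB_le (S : Finset K) (c : K) : (PsiB S c).degree ≤ S.card := by
  have hlin : ∀ ε ∈ S, (C c + C (ε - 1)⁻¹ * X).degree ≤ 1 := fun ε _ =>
    add_comm (C c) _ ▸ degree_linear_le
  refine (degree_prod_le _ _).trans ((sum_le_sum hlin).trans ?_)
  rw [sum_const, nsmul_one]

lemma degree_C_mul_PsiB_sub_le (a b : K) (S : Finset K) (u v : K) :
    (C a * PsiB S u - C b * PsiB S v).degree ≤ S.card := by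
  rw [C_mul', C_mul']
  exact (degree_sub_le _ _).trans (max_le ((degree_smul_le _ _).trans (degree_PsiB_le _ _))
    ((degree_smul_le _ _).trans (degree_PsiB_le _ _)))

lemma degree_PsiB_mul_sub_PsiB_mul {T U : Finset K} (hT : ∀ ε ∈ T, ε ≠ 1)
    (hU : ∀ ε ∈ U, ε ≠ 1) (hcard : T.card = U.card) (hsum : ∑ ε ∈ T, ε ≠ ∑ ε ∈ U, ε)
    {c d : K} (hcd : c ≠ d) :
    (PsiB T c * PsiB U d - PsiB T d * PsiB U c).degree = (T.card + U.card - 1 : ℕ) := by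
  set Q : Finset K → K → K[X] := fun S c => ∏ ε ∈ S, (X - C (c * (1 - ε)))
  have hmon : ∀ S c, (Q S c).Monic := fun S c => monic_prod_X_sub_C _ S
  have hdeg : ∀ S c, (Q S c).natDegree = S.card := fun S c =>
    natDegree_finsetProd_X_sub_C_eq_card _ _
  have hnext : ∀ S c, (Q S c).nextCoeff = -(c * ∑ ε ∈ S, (1 - ε)) := fun S c => by
    rw [prod_X_sub_C_nextCoeff, mul_sum]
  have hL : (∏ ε ∈ T, (ε - 1)⁻¹) * ∏ ε ∈ U, (ε - 1)⁻¹ ≠ 0 := by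
    simp only [ne_eq, mul_eq_zero, prod_eq_zero_iff, inv_eq_zero, sub_eq_zero, not_or]
    exact ⟨fun ⟨ε, hε, h⟩ => hT ε hε h, fun ⟨ε, hε, h⟩ => hU ε hε h⟩
  have hsum' : ∑ ε ∈ T, (1 - ε) - ∑ ε ∈ U, (1 - ε) = ∑ ε ∈ U, ε - ∑ ε ∈ T, ε := by
    rw [sum_sub_distrib, sum_sub_distrib, sum_const, sum_const, hcard]
    ring
  rw [PsiB_eq_C_mul_prod_X_sub_C hT, PsiB_eq_C_mul_prod_X_sub_C hT,
    PsiB_eq_C_mul_prod_X_sub_C hU, PsiB_eq_C_mul_prod_X_sub_C hU,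
    show ∀ a b x y z w : K[X], a * x * (b * y) - a * z * (b * w) = a * b * (x * y - z * w)
      from fun _ _ _ _ _ _ => by ring, ← C_mul, degree_C_mul hL,
    Monic.degree_sub_eq_of_nextCoeff_ne ((hmon T c).mul (hmon U d)) ((hmon T d).mul (hmon U c)),
    natDegree_mul (hmon T c).ne_zero (hmon U d).ne_zero, hdeg, hdeg]
  · rw [natDegree_mul (hmon T c).ne_zero (hmon U d).ne_zero,
      natDegree_mul (hmon T d).ne_zero (hmon U c).ne_zero, hdeg, hdeg, hdeg, hdeg, hcard]
  · rw [(hmon T c).nextCoeff_mul (hmon U d), (hmon T d).nextCoeff_mul (hmon U c), hnext, hnext,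
      hnext, hnext]
    intro h
    refine mul_ne_zero (sub_ne_zero.mpr hcd) (sub_ne_zero.mpr hsum.symm) ?_
    rw [← hsum']
    linear_combination -h

end PsiB

theorem stmt_14_general (K : Type*) [Field K] [IsAlgClosed K] [DecidableEq K]
    (g : ℕ) (hg : 1 < g)
    (hchar : ((2 * (2 * g + 1) : ℕ) : K) ≠ 0)
    (hstar : ringChar K = 0 ∨
      (Nat.Prime (2 * g + 1) ∧ (ringChar K).Prime ∧ ringChar K ≠ 2 ∧
        orderOf ((ringChar K : ℕ) : ZMod (2 * g + 1)) = 2 * g))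
    (I J : Finset K) (hJ : J ⊆ Mset K (2 * g + 1))
    (hJcard : J.card = g)
    (ε1 ε2 ε3 ε4 : K) (h12 : ε1 ≠ ε2)
    (h34 : ε3 ≠ ε4)
    (η1 η2 η3 η4 : K)
    (hη1 : η1 = (ε1 - 1)⁻¹) (hη2 : η2 = (ε2 - 1)⁻¹)
    (hη3 : η3 = (ε3 - 1)⁻¹) (hη4 : η4 = (ε4 - 1)⁻¹) :
    ((PsiB J η1 * PsiB (Mset K (2 * g + 1) \ J) η2 -
        PsiB J η2 * PsiB (Mset K (2 * g + 1) \ J) η1) *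
      (PsiB J η3 * PsiB (Mset K (2 * g + 1) \ J) η4 -
        PsiB J η4 * PsiB (Mset K (2 * g + 1) \ J) η3) * X -
      (C (EtaV (Mset K (2 * g + 1) \ I) η1) * PsiB J η2 -
        C (EtaV (Mset K (2 * g + 1) \ I) η2) * PsiB J η1) *
      (C (EtaV I η3) * PsiB (Mset K (2 * g + 1) \ J) η4 -
        C (EtaV I η4) * PsiB (Mset K (2 * g + 1) \ J) η3)).degree
      = ((4 * g - 1 : ℕ) : WithBot ℕ) ∧
    ((PsiB J η1 * PsiB (Mset K (2 * g + 1) \ J) η2 -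
        PsiB J η2 * PsiB (Mset K (2 * g + 1) \ J) η1) *
      (PsiB J η3 * PsiB (Mset K (2 * g + 1) \ J) η4 -
        PsiB J η4 * PsiB (Mset K (2 * g + 1) \ J) η3) * X -
      (C (EtaV (Mset K (2 * g + 1) \ I) η1) * PsiB J η2 -
        C (EtaV (Mset K (2 * g + 1) \ I) η2) * PsiB J η1) *
      (C (EtaV I η3) * PsiB (Mset K (2 * g + 1) \ J) η4 -
        C (EtaV I η4) * PsiB (Mset K (2 * g + 1) \ J) η3)) ≠ 0 := by
  subst hη1 hη2 hη3 hη4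
  have : NeZero ((2 * g + 1 : ℕ) : K) :=
    ⟨fun h => hchar (by rw [Nat.cast_mul, h, mul_zero])⟩
  obtain ⟨ζ, hζ⟩ := HasEnoughRootsOfUnity.exists_primitiveRoot K (2 * g + 1)
  set M := Mset K (2 * g + 1)
  have hM1 : ∀ ε ∈ M, ε ≠ 1 := fun ε hε => ((mem_Mset_iff (by omega)).1 hε).2
  have hcard : (M \ J).card = g := by
    rw [card_sdiff_of_subset hJ, card_Mset hζ (by omega), hJcard]
    omega
  have hsum : ∑ ε ∈ J, ε ≠ ∑ ε ∈ M \ J, ε := sum_ne_sum_sdiff_Mset hζ (by omega)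
    (hstar.imp_right fun ⟨_, hp, _, hord⟩ => ⟨hp, hord.trans (by omega)⟩) hJ
  have hbracket : ∀ {a b : K}, a ≠ b → (PsiB J (a - 1)⁻¹ * PsiB (M \ J) (b - 1)⁻¹ -
      PsiB J (b - 1)⁻¹ * PsiB (M \ J) (a - 1)⁻¹).degree = (2 * g - 1 : ℕ) := fun hab => by
    rw [degree_PsiB_mul_sub_PsiB_mul (fun ε hε => hM1 ε (hJ hε))
      (fun ε hε => hM1 ε (mem_sdiff.1 hε).1) (hcard.trans hJcard.symm).symm hsum
      fun h => hab (sub_left_injective (inv_injective h)), hJcard, hcard, two_mul]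
  refine (fun hdeg => ⟨hdeg, ne_zero_of_coe_le_degree hdeg.ge⟩) ?_
  rw [show 4 * g - 1 = 2 * (2 * g - 1) + 1 by omega]
  refine degree_mul_mul_X_sub_of_degree_lt (hbracket h12) (hbracket h34) ?_
  refine ((degree_mul_le _ _).trans (add_le_add (degree_C_mul_PsiB_sub_le _ _ _ _ _)
    (degree_C_mul_PsiB_sub_le _ _ _ _ _))).trans_lt ?_
  rw [hJcard, hcard]
  exact_mod_cast (by omega : g + g < 2 * (2 * g - 1) + 1)

theorem stmt_14 (K : Type*) [Field K] [IsAlgClosed K] [DecidableEq K]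
    (g : ℕ) (hg : 1 < g)
    (hchar : ((2 * (2 * g + 1) : ℕ) : K) ≠ 0)
    (hstar : ringChar K = 0 ∨
      (Nat.Prime (2 * g + 1) ∧ (ringChar K).Prime ∧ ringChar K ≠ 2 ∧
        orderOf ((ringChar K : ℕ) : ZMod (2 * g + 1)) = 2 * g))
    (I J : Finset K) (hI : I ⊆ Mset K (2 * g + 1)) (hJ : J ⊆ Mset K (2 * g + 1))
    (hIcard : I.card = g) (hJcard : J.card = g)
    (ε1 ε2 ε3 ε4 : K) (h1 : ε1 ∈ I) (h2 : ε2 ∈ I) (h12 : ε1 ≠ ε2)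
    (h3 : ε3 ∈ Mset K (2 * g + 1) \ I) (h4 : ε4 ∈ Mset K (2 * g + 1) \ I) (h34 : ε3 ≠ ε4)
    (η1 η2 η3 η4 : K)
    (hη1 : η1 = (ε1 - 1)⁻¹) (hη2 : η2 = (ε2 - 1)⁻¹)
    (hη3 : η3 = (ε3 - 1)⁻¹) (hη4 : η4 = (ε4 - 1)⁻¹) :
    ((PsiB J η1 * PsiB (Mset K (2 * g + 1) \ J) η2 -
        PsiB J η2 * PsiB (Mset K (2 * g + 1) \ J) η1) *
      (PsiB J η3 * PsiB (Mset K (2 * g + 1) \ J) η4 -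
        PsiB J η4 * PsiB (Mset K (2 * g + 1) \ J) η3) * X -
      (C (EtaV (Mset K (2 * g + 1) \ I) η1) * PsiB J η2 -
        C (EtaV (Mset K (2 * g + 1) \ I) η2) * PsiB J η1) *
      (C (EtaV I η3) * PsiB (Mset K (2 * g + 1) \ J) η4 -
        C (EtaV I η4) * PsiB (Mset K (2 * g + 1) \ J) η3)).degree
      = ((4 * g - 1 : ℕ) : WithBot ℕ) ∧
    ((PsiB J η1 * PsiB (Mset K (2 * g + 1) \ J) η2 -
        PsiB J η2 * PsiB (Mset K (2 * g + 1) \ J) η1) *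
      (PsiB J η3 * PsiB (Mset K (2 * g + 1) \ J) η4 -
        PsiB J η4 * PsiB (Mset K (2 * g + 1) \ J) η3) * X -
      (C (EtaV (Mset K (2 * g + 1) \ I) η1) * PsiB J η2 -
        C (EtaV (Mset K (2 * g + 1) \ I) η2) * PsiB J η1) *
      (C (EtaV I η3) * PsiB (Mset K (2 * g + 1) \ J) η4 -
        C (EtaV I η4) * PsiB (Mset K (2 * g + 1) \ J) η3)) ≠ 0 :=
  stmt_14_general K g hg hchar hstar I J hJ hJcard ε1 ε2 ε3 ε4 h12 h34 η1 η2 η3 η4 hη1 hη2 hη3 hη4
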